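/- arXiv:1907.03350 — 5 statements merged into one kernel-verified Lean document; each statement's English description precedes it below -/
import Mathlib

section
/- Let F be a finite field with q elements and let t ∈ F be either 2 or −2. Then the number of matrices γ ∈ SL₂(F) with trace(γ) = t equals q². -/
/-!
If `t = 2s` with `s² = 1`, the characteristic polynomial `X² - tX + 1` is `(X - s)²`, and
`γ ↦ γ - s` identifies the matrices of `SL₂(F)` with trace `t`
with the nilpotent matrices `[[a, b], [c, -a]]`, `a² + bc = 0`. These are parametrised by
`F × F`: by `(b, 0)` when `c = 0` (forcing `a = 0`), and by `(a, c)` when `c ≠ 0`, where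
`b = -a² / c`.
-/

open Matrix

section

variable {F : Type*} [Field F]

lemma det_sub_scalar_fin_two (M : Matrix (Fin 2) (Fin 2) F) (s : F) :
    (M - scalar (Fin 2) s).det = M.det - s * M.trace + s ^ 2 := by
  simp only [det_fin_two, trace_fin_two, scalar_apply, Matrix.sub_apply, diagonal_apply_eq,
    diagonal_apply_ne, ne_eq, zero_ne_one, one_ne_zero, not_false_eq_true, sub_zero]
  ring

lemma det_add_scalar_fin_two (M : Matrix (Fin 2) (Fin 2) F) (s : F) :
    (M + scalar (Fin 2) s).det = M.det + s * M.trace + s ^ 2 := by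
  simpa [sub_eq_add_neg] using det_sub_scalar_fin_two M (-s)

lemma trace_eq_zero_and_det_eq_zero_iff (N : Matrix (Fin 2) (Fin 2) F) :
    N.trace = 0 ∧ N.det = 0 ↔ N 1 1 = -N 0 0 ∧ N 0 0 ^ 2 + N 0 1 * N 1 0 = 0 := by
  rw [trace_fin_two, det_fin_two]
  constructor
  · rintro ⟨htr, hdet⟩
    have hd : N 1 1 = -N 0 0 := by linear_combination htr
    exact ⟨hd, by rw [hd] at hdet; linear_combination -hdet⟩
  · rintro ⟨hd, h⟩
    rw [hd]
    exact ⟨by ring, by linear_combination -h⟩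

def traceEqTwoMulEquiv (s : F) (hs : s ^ 2 = 1) :
    {γ : SpecialLinearGroup (Fin 2) F // trace (γ : Matrix (Fin 2) (Fin 2) F) = 2 * s} ≃
      {N : Matrix (Fin 2) (Fin 2) F // N.trace = 0 ∧ N.det = 0} where
  toFun γ := ⟨γ.1 - scalar (Fin 2) s, by
    refine ⟨by simp [γ.2, two_mul], ?_⟩
    rw [det_sub_scalar_fin_two, γ.1.2, γ.2]
    linear_combination -hs⟩
  invFun N := ⟨⟨N.1 + scalar (Fin 2) s, by
    rw [det_add_scalar_fin_two, N.2.1, N.2.2, hs]; ring⟩, by simp [N.2.1, two_mul]⟩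
  left_inv γ := by ext : 3; simp
  right_inv N := by ext : 2; simp

open Classical in
noncomputable def tracelessDetZeroEquivProd :
    {N : Matrix (Fin 2) (Fin 2) F // N.trace = 0 ∧ N.det = 0} ≃ F × F where
  toFun N := (if N.1 1 0 = 0 then N.1 0 1 else N.1 0 0, N.1 1 0)
  invFun p := if hp : p.2 = 0 then ⟨!![0, p.1; 0, 0], by simp [trace_fin_two_of, det_fin_two_of]⟩
    else ⟨!![p.1, -p.1 ^ 2 / p.2; p.2, -p.1], by
      rw [trace_fin_two_of, det_fin_two_of]
      exact ⟨by ring, by field_simp; ring⟩⟩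
  left_inv := by
    rintro ⟨N, hN⟩
    obtain ⟨hd, h⟩ := (trace_eq_zero_and_det_eq_zero_iff N).mp hN
    by_cases hc : N 1 0 = 0
    · have ha : N 0 0 = 0 := by simpa [hc] using h
      simp only [hc, if_true]
      ext i j; fin_cases i <;> fin_cases j <;> simp [hc, ha, hd]
    · have hb : N 0 1 = -N 0 0 ^ 2 / N 1 0 := by
        field_simp; linear_combination h
      simp only [hc, if_false]
      ext i j; fin_cases i <;> fin_cases j <;> simp [hb, hd]
  right_inv := by
    rintro ⟨x, y⟩
    by_cases hy : y = 0 <;> simp [hy]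

theorem card_traceless_det_zero [Fintype F] :
    Nat.card {N : Matrix (Fin 2) (Fin 2) F // N.trace = 0 ∧ N.det = 0} = Fintype.card F ^ 2 := by
  rw [Nat.card_congr tracelessDetZeroEquivProd, Nat.card_prod, Nat.card_eq_fintype_card, sq]

end

/-- For a finite field `F` with `q` elements and `t = 2` or `t = -2`, the number of matrices
in `SL₂(F)` with trace `t` equals `q²`. -/
theorem stmt0 (F : Type*) [Field F] [Fintype F] (t : F) (ht : t = 2 ∨ t = -2) :
    Nat.card {γ : Matrix.SpecialLinearGroup (Fin 2) F //
      Matrix.trace (γ : Matrix (Fin 2) (Fin 2) F) = t} = Fintype.card F ^ 2 := by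
  obtain ⟨s, hs, rfl⟩ : ∃ s : F, s ^ 2 = 1 ∧ t = 2 * s := by
    rcases ht with rfl | rfl
    · exact ⟨1, by ring, by ring⟩
    · exact ⟨-1, by ring, by ring⟩
  rw [Nat.card_congr (traceEqTwoMulEquiv s hs), card_traceless_det_zero]
end

section
/- Let F be a finite field with q elements, let ψ : F → ℂ be a nontrivial additive character of F, and let x, y, z, w ∈ F with y ≠ 0. Then ∑_{γ ∈ SL₂(F)} ψ(γ₁₁·x + γ₁₂·y + γ₂₁·z + γ₂₂·w) = q · ∑_{c ∈ Fˣ} ψ(c·(z − y⁻¹wx) − c⁻¹·y), where γ₁₁, γ₁₂, γ₂₁, γ₂₂ denote the four entries of γ. -/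
/-!
Split `SL₂(F)` along its Bruhat decomposition. The matrices with `γ₁₀ = 0` are
`!![a, b; 0, a⁻¹]`, and their contribution vanishes after summing `ψ (b * y)` over `b`, since
`y ≠ 0`. The matrices with `γ₁₀ = c ≠ 0` are `!![a, c⁻¹ (a d - 1); c, d]` with `a, d` free;
summing over `d` gives `q` exactly when `c⁻¹ y a + w = 0`, i.e. `a = -c y⁻¹ w`, and `0` otherwise,
which leaves `q ψ (c (z - y⁻¹ w x) - c⁻¹ y)`.
-/

open Matrix
open scoped MatrixGroups

namespace Matrix.SpecialLinearGroup

variable {F : Type*} [Field F]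

def upperTriangular (a : Fˣ) (b : F) : SL(2, F) :=
  ⟨!![(a : F), b; 0, ((a⁻¹ : Fˣ) : F)], by simp [det_fin_two_of]⟩

def ofLowerLeft (c : Fˣ) (a d : F) : SL(2, F) :=
  ⟨!![a, (c⁻¹ : F) * (a * d - 1); (c : F), d], by
    simp only [det_fin_two_of]; field_simp; ring⟩

lemma coe_zero_zero_ne_zero_of_coe_one_zero_eq_zero {γ : SL(2, F)} (h : γ 1 0 = 0) :
    γ 0 0 ≠ 0 := by
  intro h'
  have hdet := γ.det_coe
  rw [det_fin_two, h, h'] at hdet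
  simp at hdet

variable [DecidableEq F]

def bruhatEquiv : SL(2, F) ≃ (Fˣ × F) ⊕ (Fˣ × F × F) where
  toFun γ := if h : γ 1 0 = 0 then
      .inl (Units.mk0 (γ 0 0) (coe_zero_zero_ne_zero_of_coe_one_zero_eq_zero h), γ 0 1)
    else .inr (Units.mk0 (γ 1 0) h, γ 0 0, γ 1 1)
  invFun
    | .inl (a, b) => upperTriangular a b
    | .inr (c, a, d) => ofLowerLeft c a d
  left_inv γ := by
    have hdet := γ.det_coe
    rw [det_fin_two] at hdet
    by_cases h : γ 1 0 = 0
    · rw [h, mul_zero, sub_zero] at hdet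
      simp only [h, dite_true]
      ext i j
      fin_cases i <;> fin_cases j <;> simp [upperTriangular, h]
      exact (eq_inv_of_mul_eq_one_right hdet).symm
    · simp only [h, dite_false]
      ext i j
      fin_cases i <;> fin_cases j <;> simp [ofLowerLeft]
      field_simp
      linear_combination hdet
  right_inv
    | .inl (a, b) => by simp [upperTriangular]
    | .inr (c, a, d) => by simp [ofLowerLeft]

end Matrix.SpecialLinearGroup

section CharacterSums

variable {F : Type*} [Field F] [Fintype F] [DecidableEq F] {ψ : AddChar F ℂ}

lemma sum_upperTriangular_eq_zero (hψ : ψ ≠ 1) (x w : F) {y : F} (hy : y ≠ 0) :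
    ∑ a : Fˣ, ∑ b : F, ψ (a * x + b * y + ((a⁻¹ : Fˣ) : F) * w) = 0 := by
  refine Finset.sum_eq_zero fun a _ => ?_
  have hsplit (b : F) : ψ (a * x + b * y + ((a⁻¹ : Fˣ) : F) * w) =
      ψ (a * x + ((a⁻¹ : Fˣ) : F) * w) * ψ (b * y) := by
    rw [← AddChar.map_add_eq_mul]; ring_nf
  simp only [hsplit, ← Finset.mul_sum, AddChar.sum_mulShift y (.of_ne_one hψ), if_neg hy,
    Nat.cast_zero, mul_zero]

lemma sum_ofLowerLeft_eq (hψ : ψ ≠ 1) (x w z : F) {y : F} (hy : y ≠ 0) (c : Fˣ) :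
    ∑ a : F, ∑ d : F, ψ (a * x + (c⁻¹ : F) * (a * d - 1) * y + c * z + d * w) =
      Fintype.card F * ψ (c * (z - y⁻¹ * w * x) - (c⁻¹ : F) * y) := by
  have hsplit (a d : F) : ψ (a * x + (c⁻¹ : F) * (a * d - 1) * y + c * z + d * w) =
      ψ (a * x + c * z - (c⁻¹ : F) * y) * ψ (d * ((c⁻¹ : F) * y * a + w)) := by
    rw [← AddChar.map_add_eq_mul]; ring_nf
  have hroot (a : F) : (c⁻¹ : F) * y * a + w = 0 ↔ a = -(c * y⁻¹ * w) := by
    have hc : (c : F) ≠ 0 := c.ne_zero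
    constructor <;> intro h
    · field_simp at h ⊢
      linear_combination h
    · rw [h]; field_simp; ring
  simp only [hsplit, ← Finset.mul_sum, AddChar.sum_mulShift _ (.of_ne_one hψ), hroot,
    Nat.cast_ite, Nat.cast_zero, mul_ite, mul_zero, Finset.sum_ite_eq', Finset.mem_univ, if_true]
  rw [mul_comm]
  congr 2
  ring

end CharacterSums

open Matrix.SpecialLinearGroup in
/-- For a finite field `F` with `q` elements, a nontrivial additive character `ψ : F → ℂ`,
and `x y z w : F` with `y ≠ 0`,
`∑_{γ ∈ SL₂(F)} ψ(γ₀₀x + γ₀₁y + γ₁₀z + γ₁₁w) = q ∑_{c ∈ Fˣ} ψ(c(z − y⁻¹wx) − c⁻¹y)`. -/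
theorem stmt2 (F : Type*) [Field F] [Fintype F] [DecidableEq F]
    (ψ : AddChar F ℂ) (hψ : ψ ≠ 1) (x y z w : F) (hy : y ≠ 0) :
    ∑ γ : Matrix.SpecialLinearGroup (Fin 2) F,
        ψ ((γ : Matrix (Fin 2) (Fin 2) F) 0 0 * x + (γ : Matrix (Fin 2) (Fin 2) F) 0 1 * y +
           (γ : Matrix (Fin 2) (Fin 2) F) 1 0 * z + (γ : Matrix (Fin 2) (Fin 2) F) 1 1 * w)
      = (Fintype.card F : ℂ) *
        ∑ c : Fˣ, ψ ((c : F) * (z - y⁻¹ * w * x) - ((c⁻¹ : Fˣ) : F) * y) := by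
  rw [← bruhatEquiv.symm.sum_comp, Fintype.sum_sum_type]
  simp only [bruhatEquiv, Equiv.coe_fn_symm_mk, upperTriangular, ofLowerLeft, of_apply,
    cons_val', cons_val_zero, cons_val_one, empty_val', cons_val_fin_one,
    zero_mul, add_zero, Fintype.sum_prod_type]
  rw [sum_upperTriangular_eq_zero hψ x w hy, zero_add, Finset.mul_sum]
  simp only [sum_ofLowerLeft_eq hψ x w z hy, Units.val_inv_eq_inv_val]
end

section
/- The group SL₂(ℤ[i]) is generated by the four matrices T₁ = [[1,1],[0,1]], Tᵢ = [[1,i],[0,1]], S = [[0,−1],[1,0]], and Q = [[−i,0],[0,i]]; that is, the subgroup of SL₂(ℤ[i]) generated by {T₁, Tᵢ, S, Q} is the whole group. -/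
/-!
Euclidean algorithm on the lower left entry: for `A = !![a, b; c, d]` with `c ≠ 0`, the matrix
`w * u (-(a / c)) * A` has lower left entry `a % c`, where `u x = !![1, x; 0, 1]` and
`w = !![0, -1; 1, 0]`. When `c = 0`, `a` is a unit with inverse `d` and
`A = diag(a, d) * u (d * b)`, and `diag(a, d)` is itself a product of `u`'s and `w`'s.
Over `ℤ[i]`, every `u x` is a product of powers of `u 1` and `u i`.
-/

namespace Matrix.SpecialLinearGroup

open scoped MatrixGroups

section CommRing

variable {R : Type*} [CommRing R]

def upperTransvection (x : R) : SL(2, R) :=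
  ⟨!![1, x; 0, 1], by simp [det_fin_two_of]⟩

def weylElement : SL(2, R) :=
  ⟨!![0, -1; 1, 0], by simp [det_fin_two_of]⟩

@[simp]
lemma coe_upperTransvection (x : R) :
    (upperTransvection x : Matrix (Fin 2) (Fin 2) R) = !![1, x; 0, 1] := rfl

@[simp]
lemma coe_weylElement : ((weylElement : SL(2, R)) : Matrix (Fin 2) (Fin 2) R) = !![0, -1; 1, 0] :=
  rfl

lemma upperTransvection_add (x y : R) :
    upperTransvection (x + y) = upperTransvection x * upperTransvection y := by
  apply Subtype.ext
  simp [add_comm]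

def upperTransvectionHom : Multiplicative R →* SL(2, R) :=
  MonoidHom.mk' (fun x => upperTransvection x.toAdd) fun _ _ => upperTransvection_add _ _

lemma upperTransvection_zsmul (n : ℤ) (x : R) :
    upperTransvection (n • x) = upperTransvection x ^ n :=
  upperTransvectionHom.map_zpow (Multiplicative.ofAdd x) n

/-- `w * u d * w⁻¹` is the lower transvection with entry `-d`, and
`u a * (w * u d * w⁻¹) * u a = !![0, a; -d, 0]` when `a * d = 1`. -/
lemma eq_upperTransvection_weylElement_prod_of_apply_one_zero_eq_zero (A : SL(2, R))
    (hc : A 1 0 = 0) :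
    A = upperTransvection (A 0 0) * weylElement * upperTransvection (A 1 1) * weylElement⁻¹ *
      upperTransvection (A 0 0) * weylElement * upperTransvection (A 1 1 * A 0 1) := by
  have hdet : A 0 0 * A 1 1 = 1 := by
    have := A.det_coe
    rwa [det_fin_two, hc, mul_zero, sub_zero] at this
  apply Subtype.ext
  simp only [coe_mul, coe_upperTransvection, coe_weylElement, coe_inv, adjugate_fin_two_of,
    mul_fin_two]
  ext i j
  fin_cases i <;> fin_cases j <;> simp <;> grind

end CommRing

section EuclideanDomain

variable {R : Type*} [EuclideanDomain R]

lemma weylElement_mul_upperTransvection_mul_apply_one_zero (A : SL(2, R)) :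
    (weylElement * upperTransvection (-(A 0 0 / A 1 0)) * A : SL(2, R)) 1 0 = A 0 0 % A 1 0 := by
  rw [EuclideanDomain.mod_eq_sub_mul_div]
  simp [mul_apply, Fin.sum_univ_two, sub_eq_add_neg, mul_comm]

theorem mem_of_upperTransvection_mem_of_weylElement_mem {H : Subgroup SL(2, R)}
    (hu : ∀ x, upperTransvection x ∈ H) (hw : weylElement ∈ H) (A : SL(2, R)) : A ∈ H := by
  induction hA : A 1 0 using (EuclideanDomain.r_wellFounded (R := R)).induction generalizing A with
  | _ c ih =>
    subst hA
    by_cases hc : A 1 0 = 0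
    · rw [eq_upperTransvection_weylElement_prod_of_apply_one_zero_eq_zero A hc]
      refine mul_mem (mul_mem (mul_mem (mul_mem (mul_mem (mul_mem ?_ hw) ?_) (inv_mem hw)) ?_)
        hw) ?_ <;> exact hu _
    · set P := weylElement * upperTransvection (-(A 0 0 / A 1 0))
      have hPA : P * A ∈ H := ih _ (EuclideanDomain.mod_lt _ hc) (P * A)
        (weylElement_mul_upperTransvection_mul_apply_one_zero A)
      have hP : P ∈ H := mul_mem hw (hu _)
      simpa using mul_mem (inv_mem hP) hPA

theorem closure_upperTransvection_weylElement :
    Subgroup.closure (insert weylElement (Set.range upperTransvection)) =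
      (⊤ : Subgroup SL(2, R)) :=
  eq_top_iff.2 fun A _ => mem_of_upperTransvection_mem_of_weylElement_mem
    (fun x => Subgroup.subset_closure (Set.mem_insert_of_mem _ (Set.mem_range_self x)))
    (Subgroup.subset_closure (Set.mem_insert _ _)) A

end EuclideanDomain

end Matrix.SpecialLinearGroup

namespace Zsqrtd

open Matrix.SpecialLinearGroup
open scoped MatrixGroups

lemma upperTransvection_mem_of_one_mem_of_sqrtd_mem {d : ℤ} {H : Subgroup SL(2, ℤ√d)}
    (h1 : upperTransvection 1 ∈ H) (hsqrtd : upperTransvection sqrtd ∈ H) (x : ℤ√d) :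
    upperTransvection x ∈ H := by
  have hx : x = x.re • 1 + x.im • sqrtd := by ext <;> simp
  rw [hx, upperTransvection_add, upperTransvection_zsmul, upperTransvection_zsmul]
  exact mul_mem (zpow_mem h1 _) (zpow_mem hsqrtd _)

end Zsqrtd

/-- `SL₂(ℤ[i])` is generated by `T₁ = [[1,1],[0,1]]`, `Tᵢ = [[1,i],[0,1]]`,
`S = [[0,−1],[1,0]]`, and `Q = [[−i,0],[0,i]]`, where `i = Zsqrtd.sqrtd` is the
imaginary unit in the Gaussian integers. -/
theorem stmt4 :
    Subgroup.closure
      ({⟨!![1, 1; 0, 1], by simp [Matrix.det_fin_two_of]⟩,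
        ⟨!![1, Zsqrtd.sqrtd; 0, 1], by simp [Matrix.det_fin_two_of]⟩,
        ⟨!![0, -1; 1, 0], by simp [Matrix.det_fin_two_of]⟩,
        ⟨!![-Zsqrtd.sqrtd, 0; 0, Zsqrtd.sqrtd], by simp [Matrix.det_fin_two_of]⟩} :
        Set (Matrix.SpecialLinearGroup (Fin 2) GaussianInt)) = ⊤ := by
  rw [eq_top_iff, ← Matrix.SpecialLinearGroup.closure_upperTransvection_weylElement,
    Subgroup.closure_le]
  rintro _ (rfl | ⟨x, rfl⟩)
  · exact Subgroup.subset_closure (Or.inr (Or.inr (Or.inl rfl)))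
  · exact Zsqrtd.upperTransvection_mem_of_one_mem_of_sqrtd_mem
      (Subgroup.subset_closure (Or.inl rfl)) (Subgroup.subset_closure (Or.inr (Or.inl rfl))) x
end

section
/- For every ε > 0 there is a constant C > 0 such that for all real X ≥ 2 and every t ∈ ℤ[i], the number of matrices g = [[a,b],[c,d]] ∈ SL₂(ℤ[i]) with |a|² + |b|² + |c|² + |d|² < X² and a + d = t is at most C·X^{2+ε}. -/
/-!
Write `g = [[a, b], [c, d]]`. The trace fixes `d = t - a`, and `det g = 1` then says
`b * c = a * (t - a) - 1 =: m`. All entries lie in the square `|Re|, |Im| ≤ X`, which has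
`O(X²)` points, so it suffices to count, for each `a`, the factorisations `b * c = m` with `b, c`
in the square. If `m ≠ 0` then `N m ≤ 4 X⁴` and `b` is a divisor of `m`, so the divisor bound
`d(m) ≪_ε N(m)^ε` in `ℤ[i]` gives `O(X^ε)` of them. If `m = 0` then `a` is a unit, and `b * c = 0`
leaves `O(X²)` choices.

The divisor bound holds in every factorial monoid with a multiplicative norm that takes only
finitely many values below each bound: `d(m) ≤ #units · ∏ (v_π(m) + 1)`, and `v + 1 ≤ N(π)^(ε v)`
once `N(π) ≥ 2^(1/ε)`, while each of the finitely many smaller primes costs a bounded factor.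
-/

open Finset UniqueFactorizationMonoid

theorem Multiset.card_subtype_le_le_prod_count_add_one {α : Type*} [DecidableEq α]
    (F : Multiset α) :
    Nat.card {s : Multiset α // s ≤ F} ≤ ∏ π ∈ F.toFinset, (F.count π + 1) := by
  let f : {s // s ≤ F} → Π π : F.toFinset, Fin (F.count π.1 + 1) :=
    fun s π => ⟨s.1.count π.1, Nat.lt_succ_of_le (Multiset.le_iff_count.mp s.2 π.1)⟩
  have hf : f.Injective := by
    rintro ⟨s, hs⟩ ⟨s', hs'⟩ h
    ext π
    dsimp only
    by_cases hπ : π ∈ F.toFinset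
    · exact congrArg Fin.val (congrFun h ⟨π, hπ⟩)
    · have hF : F.count π = 0 := Multiset.count_eq_zero.mpr (by simpa using hπ)
      have := Multiset.le_iff_count.mp hs π
      have := Multiset.le_iff_count.mp hs' π
      omega
  calc Nat.card {s // s ≤ F} ≤ Nat.card (Π π : F.toFinset, Fin (F.count π.1 + 1)) :=
        Nat.card_le_card_of_injective f hf
    _ = ∏ π ∈ F.toFinset, (F.count π + 1) := by
        simp only [Nat.card_eq_fintype_card, Fintype.card_pi, Fintype.card_fin]
        exact Finset.prod_attach F.toFinset (fun π => F.count π + 1)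

section

variable {α : Type*} [CommMonoidWithZero α] [NormalizationMonoid α]
  [UniqueFactorizationMonoid α]

theorem card_subtype_dvd_le_card_units_mul_prod [DecidableEq α] [Finite αˣ] {m : α} (hm : m ≠ 0) :
    Nat.card {b // b ∣ m} ≤
      Nat.card αˣ * ∏ π ∈ (normalizedFactors m).toFinset, ((normalizedFactors m).count π + 1) := by
  have : Finite {s // s ≤ normalizedFactors m} :=
    (normalizedFactors m).powerset.toFinset.finite_toSet.subset fun s hs =>
      Multiset.mem_toFinset.mpr (Multiset.mem_powerset.mpr hs)
  have hne : ∀ b : {b // b ∣ m}, b.1 ≠ 0 := fun b hb => hm (zero_dvd_iff.mp (hb ▸ b.2))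
  let f : {b // b ∣ m} → {s // s ≤ normalizedFactors m} × αˣ := fun b =>
    (⟨normalizedFactors b.1, (dvd_iff_normalizedFactors_le_normalizedFactors (hne b) hm).mp b.2⟩,
      normUnit b.1)
  have hf : f.Injective := by
    rintro b b' h
    simp only [f, Prod.mk.injEq, Subtype.mk.injEq] at h
    have hassoc : Associated b.1 b'.1 :=
      (prod_normalizedFactors (hne b)).symm.trans (h.1 ▸ prod_normalizedFactors (hne b'))
    have hnorm : normalize b.1 = normalize b'.1 := normalize_eq_normalize_iff.mpr hassoc.dvd_dvd
    rw [normalize_apply, normalize_apply, h.2] at hnorm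
    exact Subtype.ext ((Units.mul_left_inj _).mp hnorm)
  calc Nat.card {b // b ∣ m} ≤ Nat.card ({s // s ≤ normalizedFactors m} × αˣ) :=
        Nat.card_le_card_of_injective f hf
    _ ≤ _ := by
        rw [Nat.card_prod, mul_comm]
        exact Nat.mul_le_mul_left _ (Multiset.card_subtype_le_le_prod_count_add_one _)

theorem map_eq_prod_pow_count [DecidableEq α] (N : α →* ℕ) {m : α} (hm : m ≠ 0) :
    N m = ∏ π ∈ (normalizedFactors m).toFinset, N π ^ (normalizedFactors m).count π := by
  obtain ⟨u, hu⟩ := prod_normalizedFactors hm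
  calc N m = N ((normalizedFactors m).prod * u) := by rw [hu]
    _ = _ := by
      rw [map_mul, Nat.isUnit_iff.mp (u.isUnit.map N), mul_one, map_multiset_prod,
        Finset.prod_multiset_map_count]

end

theorem natCast_add_one_le_max_inv_mul_pow {a y : ℝ} (ha : 0 < a) (hy : 1 + a ≤ y) (c : ℕ) :
    (c : ℝ) + 1 ≤ max 1 a⁻¹ * y ^ c := by
  have hbern : 1 + c * a ≤ y ^ c :=
    (one_add_mul_le_pow (by linarith) c).trans (pow_le_pow_left₀ (by linarith) hy c)
  have hc : (0 : ℝ) ≤ c := c.cast_nonneg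
  calc (c : ℝ) + 1 ≤ max 1 a⁻¹ * (1 + c * a) := by
        rcases le_total 1 a with h | h
        · rw [max_eq_left ((inv_le_one₀ ha).mpr h)]; nlinarith
        · rw [max_eq_right ((one_le_inv₀ ha).mpr h), mul_add, mul_one, mul_left_comm,
            inv_mul_cancel₀ ha.ne', mul_one]
          linarith [(one_le_inv₀ ha).mpr h]
    _ ≤ max 1 a⁻¹ * y ^ c := by gcongr

theorem finite_units_of_finite_setOf_lt {α : Type*} [Monoid α] (N : α →* ℕ)
    (hfin : ∀ B, {x | N x < B}.Finite) : Finite αˣ :=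
  have : Finite {x | N x < 2} := (hfin 2).to_subtype
  Finite.of_injective (fun u : αˣ => (⟨u, by simp [Nat.isUnit_iff.mp (u.isUnit.map N)]⟩ :
    {x | N x < 2})) fun _ _ h => Units.ext (congrArg Subtype.val h)

theorem exists_card_dvd_le_mul_rpow {α : Type*} [CommMonoidWithZero α]
    [UniqueFactorizationMonoid α] (N : α →* ℕ) (hN : ∀ x, x ≠ 0 → ¬IsUnit x → 2 ≤ N x)
    (hfin : ∀ B, {x | N x < B}.Finite) {ε : ℝ} (hε : 0 < ε) :
    ∃ C > 0, ∀ m : α, m ≠ 0 → (Nat.card {b // b ∣ m} : ℝ) ≤ C * (N m : ℝ) ^ ε := by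
  classical
  let _ : StrongNormalizationMonoid α := UniqueFactorizationMonoid.strongNormalizationMonoid
  have := finite_units_of_finite_setOf_lt N hfin
  set B := ⌈(2 : ℝ) ^ ε⁻¹⌉₊
  set M := max 1 ((2 : ℝ) ^ ε - 1)⁻¹
  set small := (hfin B).toFinset
  have hM : 1 ≤ M := le_max_left _ _
  refine ⟨Nat.card αˣ * M ^ small.card,
    mul_pos (by exact_mod_cast Nat.card_pos) (by positivity), fun m hm => ?_⟩
  set F := normalizedFactors m
  have hfactor : ∀ π ∈ F.toFinset,
      (F.count π : ℝ) + 1 ≤ (if N π < B then M else 1) * ((N π : ℝ) ^ ε) ^ F.count π := by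
    intro π hπ
    have hp := prime_of_normalized_factor π (Multiset.mem_toFinset.mp hπ)
    have hq : (2 : ℝ) ≤ N π := by exact_mod_cast hN π hp.ne_zero hp.not_isUnit
    split_ifs with hsmall
    · refine natCast_add_one_le_max_inv_mul_pow (by simp [Real.one_lt_rpow, hε]) ?_ _
      rw [add_sub_cancel]
      exact Real.rpow_le_rpow zero_le_two hq hε.le
    · have h2 : (2 : ℝ) ≤ (N π : ℝ) ^ ε :=
        (Real.rpow_inv_le_iff_of_pos zero_le_two (Nat.cast_nonneg _) hε).mp
          ((Nat.le_ceil _).trans (by exact_mod_cast not_lt.mp hsmall))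
      simpa using natCast_add_one_le_max_inv_mul_pow one_pos (by linarith) (F.count π)
  have hnorm : ∏ π ∈ F.toFinset, ((N π : ℝ) ^ ε) ^ F.count π = (N m : ℝ) ^ ε := by
    rw [map_eq_prod_pow_count N hm, Nat.cast_prod,
      ← Real.finsetProd_rpow _ _ fun π _ => by positivity]
    exact prod_congr rfl fun π _ => by rw [Real.rpow_pow_comm (by positivity), Nat.cast_pow]
  have hsmall : #{π ∈ F.toFinset | N π < B} ≤ small.card :=
    card_le_card fun π hπ => by simpa [small] using (mem_filter.mp hπ).2
  calc (Nat.card {b // b ∣ m} : ℝ)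
      ≤ Nat.card αˣ * ∏ π ∈ F.toFinset, ((F.count π : ℝ) + 1) := by
        exact_mod_cast card_subtype_dvd_le_card_units_mul_prod hm
    _ ≤ Nat.card αˣ * ∏ π ∈ F.toFinset,
          ((if N π < B then M else 1) * ((N π : ℝ) ^ ε) ^ F.count π) := by
        gcongr with π hπ
        exact hfactor π hπ
    _ = Nat.card αˣ * M ^ #{π ∈ F.toFinset | N π < B} * (N m : ℝ) ^ ε := by
        rw [prod_mul_distrib, hnorm, prod_ite, prod_const, prod_const_one, mul_one, mul_assoc]
    _ ≤ Nat.card αˣ * M ^ small.card * (N m : ℝ) ^ ε := by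
        gcongr

theorem card_filter_mul_eq_le_card_dvd {α : Type*} [MonoidWithZero α] [IsLeftCancelMulZero α]
    [DecidableEq α] (s t : Finset α) {m : α} (hm : m ≠ 0) [Finite {b // b ∣ m}] :
    #{p ∈ s ×ˢ t | p.1 * p.2 = m} ≤ Nat.card {b // b ∣ m} := by
  rw [← Nat.card_eq_finsetCard]
  refine Nat.card_le_card_of_injective (fun p => ⟨p.1.1, Dvd.intro _ (mem_filter.mp p.2).2⟩) ?_
  rintro ⟨⟨b, c⟩, hp⟩ ⟨⟨b', c'⟩, hp'⟩ h
  obtain rfl : b = b' := congrArg Subtype.val h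
  have hbc : b * c = m := (mem_filter.mp hp).2
  have hbc' : b * c' = m := (mem_filter.mp hp').2
  obtain rfl : c = c' := mul_left_cancel₀ (left_ne_zero_of_mul (hbc ▸ hm)) (hbc.trans hbc'.symm)
  rfl

theorem card_filter_mul_eq_zero_le {α : Type*} [MulZeroClass α] [NoZeroDivisors α]
    [DecidableEq α] (s t : Finset α) : #{p ∈ s ×ˢ t | p.1 * p.2 = 0} ≤ #s + #t := by
  calc #{p ∈ s ×ˢ t | p.1 * p.2 = 0} ≤ #(({0} ×ˢ t) ∪ (s ×ˢ {0})) := by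
        refine card_le_card ?_
        rintro ⟨b, c⟩ hp
        obtain ⟨⟨hs, ht⟩, h⟩ : (b ∈ s ∧ c ∈ t) ∧ b * c = 0 := by simpa using hp
        rcases mul_eq_zero.mp h with rfl | rfl <;> simp [hs, ht]
    _ ≤ #({0} ×ˢ t) + #(s ×ˢ {0}) := card_union_le _ _
    _ = #s + #t := by simp [add_comm]

theorem card_le_natCard_units_of_forall_isUnit {α : Type*} [Monoid α] [Finite αˣ] {s : Finset α}
    (hs : ∀ a ∈ s, IsUnit a) : #s ≤ Nat.card αˣ := by
  rw [← Nat.card_eq_finsetCard]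
  exact Nat.card_le_card_of_injective (fun a => (hs a.1 a.2).unit)
    fun a b h => Subtype.ext (congrArg Units.val h)

theorem Matrix.SpecialLinearGroup.card_le_sum_card_filter_mul_eq {R : Type*} [CommRing R]
    [DecidableEq R] (s : Finset R) (t : R) (P : Matrix.SpecialLinearGroup (Fin 2) R → Prop)
    (hP : ∀ g, P g → (∀ i j, g i j ∈ s) ∧ g 0 0 + g 1 1 = t) :
    Nat.card {g // P g} ≤ ∑ a ∈ s, #{p ∈ s ×ˢ s | p.1 * p.2 = a * (t - a) - 1} := by
  rw [← card_sigma, ← Nat.card_eq_finsetCard]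
  have hdet (g : Matrix.SpecialLinearGroup (Fin 2) R) : g 0 0 * g 1 1 - g 0 1 * g 1 0 = 1 := by
    rw [← Matrix.det_fin_two, g.det_coe]
  refine Nat.card_le_card_of_injective (fun g => ⟨⟨g.1 0 0, (g.1 0 1, g.1 1 0)⟩, ?_⟩) ?_
  · obtain ⟨hs, htr⟩ := hP g.1 g.2
    simp only [mem_sigma, mem_filter, mem_product]
    refine ⟨hs 0 0, ⟨hs 0 1, hs 1 0⟩, ?_⟩
    linear_combination (g.1 0 0) * htr - hdet g.1
  · rintro ⟨g, hg⟩ ⟨g', hg'⟩ h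
    simp only [Subtype.mk.injEq, Sigma.mk.injEq, Prod.mk.injEq, heq_eq_eq] at h
    obtain ⟨h00, h01, h10⟩ := h
    have h11 : g 1 1 = g' 1 1 := by linear_combination (hP g hg).2 - (hP g' hg').2 - h00
    ext i j
    fin_cases i <;> fin_cases j <;> assumption

namespace GaussianInt

def natNorm : GaussianInt →* ℕ := Int.natAbsHom.toMonoidHom.comp Zsqrtd.normMonoidHom

theorem natNorm_apply (z : GaussianInt) :
    natNorm z = z.re.natAbs * z.re.natAbs + z.im.natAbs * z.im.natAbs :=
  natAbs_norm_eq z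

theorem natNorm_eq_sq_norm (z : GaussianInt) : (natNorm z : ℝ) = ‖toComplex z‖ ^ 2 := by
  rw [Complex.sq_norm, ← intCast_real_norm, ← natCast_natAbs_norm]
  rfl

theorem two_le_natNorm {z : GaussianInt} (hz : z ≠ 0) (hu : ¬IsUnit z) : 2 ≤ natNorm z := by
  have h0 : natNorm z ≠ 0 := fun h => hz (norm_eq_zero.mp (Int.natAbs_eq_zero.mp h))
  have h1 : natNorm z ≠ 1 := fun h => hu (Zsqrtd.norm_eq_one_iff.mp h)
  omega

noncomputable def box (n : ℕ) : Finset GaussianInt :=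
  (Icc (-n : ℤ) n ×ˢ Icc (-n : ℤ) n).image fun p => ⟨p.1, p.2⟩

theorem mem_box {n : ℕ} {z : GaussianInt} : z ∈ box n ↔ z.re.natAbs ≤ n ∧ z.im.natAbs ≤ n := by
  simp only [box, mem_image, mem_product, mem_Icc]
  constructor
  · rintro ⟨p, hp, rfl⟩
    dsimp only
    omega
  · intro h
    exact ⟨(z.re, z.im), by omega, rfl⟩

theorem card_box (n : ℕ) : #(box n) = (2 * n + 1) ^ 2 := by
  rw [box, card_image_of_injective _ fun p q h =>
    Prod.ext (congrArg Zsqrtd.re h) (congrArg Zsqrtd.im h), card_product, Int.card_Icc, sq]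
  congr 1 <;> omega

theorem natNorm_le_of_mem_box {n : ℕ} {z : GaussianInt} (hz : z ∈ box n) :
    natNorm z ≤ 2 * n ^ 2 := by
  obtain ⟨hre, him⟩ := mem_box.mp hz
  calc natNorm z ≤ n * n + n * n := by
        rw [natNorm_apply]; exact Nat.add_le_add (Nat.mul_le_mul hre hre) (Nat.mul_le_mul him him)
    _ = 2 * n ^ 2 := by ring

theorem mem_box_of_natNorm_le {n : ℕ} {z : GaussianInt} (hz : natNorm z ≤ n) : z ∈ box n := by
  rw [natNorm_apply] at hz
  exact mem_box.mpr ⟨by nlinarith [Nat.le_mul_self z.re.natAbs],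
    by nlinarith [Nat.le_mul_self z.im.natAbs]⟩

theorem mem_box_floor_of_sq_norm_lt {X : ℝ} (hX : 0 ≤ X) {z : GaussianInt}
    (hz : ‖toComplex z‖ ^ 2 < X ^ 2) : z ∈ box ⌊X⌋₊ := by
  rw [← natNorm_eq_sq_norm, natNorm_apply] at hz
  push_cast at hz
  refine mem_box.mpr ⟨Nat.le_floor ?_, Nat.le_floor ?_⟩ <;>
    exact (abs_lt_of_sq_lt_sq' (by nlinarith) hX).2.le

theorem finite_setOf_natNorm_lt (B : ℕ) : {z | natNorm z < B}.Finite :=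
  (box B).finite_toSet.subset fun _ hz => mem_box_of_natNorm_le (le_of_lt hz)

instance : Finite GaussianIntˣ := finite_units_of_finite_setOf_lt natNorm finite_setOf_natNorm_lt

theorem card_filter_mul_eq_box_le {C δ : ℝ} (hC : 0 ≤ C) (hδ : 0 ≤ δ)
    (hdiv : ∀ m : GaussianInt, m ≠ 0 → (Nat.card {b // b ∣ m} : ℝ) ≤ C * (natNorm m : ℝ) ^ δ)
    (n : ℕ) (m : GaussianInt) :
    (#{p ∈ box n ×ˢ box n | p.1 * p.2 = m} : ℝ) ≤
      (if m = 0 then 2 * (#(box n) : ℝ) else 0) + C * (4 * n ^ 4 : ℝ) ^ δ := by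
  have hbound : 0 ≤ C * (4 * n ^ 4 : ℝ) ^ δ := by positivity
  by_cases hm : m = 0
  · subst hm
    rw [if_pos rfl]
    calc (#{p ∈ box n ×ˢ box n | p.1 * p.2 = 0} : ℝ) ≤ ((#(box n) + #(box n) : ℕ) : ℝ) := by
          exact_mod_cast card_filter_mul_eq_zero_le _ _
      _ ≤ 2 * #(box n) + C * (4 * n ^ 4 : ℝ) ^ δ := by push_cast; linarith
  rw [if_neg hm, zero_add]
  rcases eq_empty_or_nonempty {p ∈ box n ×ˢ box n | p.1 * p.2 = m} with hempty | ⟨⟨b, c⟩, hbc⟩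
  · rw [hempty, card_empty, Nat.cast_zero]
    exact hbound
  obtain ⟨⟨hb, hc⟩, hbcm⟩ : (b ∈ box n ∧ c ∈ box n) ∧ b * c = m := by simpa using hbc
  have hnorm : (natNorm m : ℝ) ≤ 4 * n ^ 4 := by
    rw [← hbcm, map_mul]
    exact_mod_cast (Nat.mul_le_mul (natNorm_le_of_mem_box hb) (natNorm_le_of_mem_box hc)).trans_eq
      (by ring)
  have := Fintype.ofFinite GaussianIntˣ
  have := UniqueFactorizationMonoid.fintypeSubtypeDvd m hm
  calc (#{p ∈ box n ×ˢ box n | p.1 * p.2 = m} : ℝ) ≤ Nat.card {b // b ∣ m} := by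
        exact_mod_cast card_filter_mul_eq_le_card_dvd _ _ hm
    _ ≤ C * (natNorm m : ℝ) ^ δ := hdiv m hm
    _ ≤ C * (4 * n ^ 4 : ℝ) ^ δ := by gcongr

theorem card_subtype_le_of_forall_mem_box {C δ : ℝ} (hC : 0 ≤ C) (hδ : 0 ≤ δ)
    (hdiv : ∀ m : GaussianInt, m ≠ 0 → (Nat.card {b // b ∣ m} : ℝ) ≤ C * (natNorm m : ℝ) ^ δ)
    {n : ℕ} {t : GaussianInt} (P : Matrix.SpecialLinearGroup (Fin 2) GaussianInt → Prop)
    (hP : ∀ g, P g → (∀ i j, g i j ∈ box n) ∧ g 0 0 + g 1 1 = t) :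
    (Nat.card {g // P g} : ℝ) ≤
      (2 * n + 1) ^ 2 * (2 * Nat.card GaussianIntˣ + C * (4 * n ^ 4 : ℝ) ^ δ) := by
  have hunits : #{a ∈ box n | a * (t - a) - 1 = 0} ≤ Nat.card GaussianIntˣ :=
    card_le_natCard_units_of_forall_isUnit fun a ha =>
      IsUnit.of_mul_eq_one _ (sub_eq_zero.mp (mem_filter.mp ha).2)
  calc (Nat.card {g // P g} : ℝ)
      ≤ ∑ a ∈ box n, (#{p ∈ box n ×ˢ box n | p.1 * p.2 = a * (t - a) - 1} : ℝ) := by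
        exact_mod_cast Matrix.SpecialLinearGroup.card_le_sum_card_filter_mul_eq _ _ P hP
    _ ≤ ∑ a ∈ box n, ((if a * (t - a) - 1 = 0 then 2 * #(box n) else 0 : ℝ) +
          C * (4 * n ^ 4 : ℝ) ^ δ) :=
        sum_le_sum fun a _ => card_filter_mul_eq_box_le hC hδ hdiv n _
    _ = 2 * #(box n) * #{a ∈ box n | a * (t - a) - 1 = 0} +
          #(box n) * (C * (4 * n ^ 4 : ℝ) ^ δ) := by
        rw [sum_add_distrib, sum_ite, sum_const, sum_const_zero, add_zero, sum_const,
          nsmul_eq_mul, nsmul_eq_mul]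
        ring
    _ ≤ 2 * #(box n) * Nat.card GaussianIntˣ + #(box n) * (C * (4 * n ^ 4 : ℝ) ^ δ) := by
        gcongr
    _ = (2 * n + 1) ^ 2 * (2 * Nat.card GaussianIntˣ + C * (4 * n ^ 4 : ℝ) ^ δ) := by
        rw [card_box]
        push_cast
        ring

theorem mem_box_floor_of_sum_sq_norm_lt {X : ℝ} (hX : 0 ≤ X)
    {M : Matrix (Fin 2) (Fin 2) GaussianInt}
    (hM : ‖toComplex (M 0 0)‖ ^ 2 + ‖toComplex (M 0 1)‖ ^ 2 + ‖toComplex (M 1 0)‖ ^ 2 +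
      ‖toComplex (M 1 1)‖ ^ 2 < X ^ 2) (i j : Fin 2) : M i j ∈ box ⌊X⌋₊ := by
  have h := fun i j => sq_nonneg ‖toComplex (M i j)‖
  refine mem_box_floor_of_sq_norm_lt hX ?_
  fin_cases i <;> fin_cases j <;> simp only [Fin.zero_eta, Fin.mk_one] <;>
    linarith [h 0 0, h 0 1, h 1 0, h 1 1]

end GaussianInt

/-- For every `ε > 0` there is `C > 0` such that for all real `X ≥ 2` and every
`t ∈ ℤ[i]`, the number of `g = [[a,b],[c,d]] ∈ SL₂(ℤ[i])` with
`|a|² + |b|² + |c|² + |d|² < X²` and trace `a + d = t` is at most `C · X^{2+ε}`. -/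
theorem stmt9 : ∀ ε > (0 : ℝ), ∃ C > (0 : ℝ), ∀ X : ℝ, 2 ≤ X → ∀ t : GaussianInt,
    (Nat.card {g : Matrix.SpecialLinearGroup (Fin 2) GaussianInt //
        (‖GaussianInt.toComplex ((g : Matrix (Fin 2) (Fin 2) GaussianInt) 0 0)‖ ^ 2 +
         ‖GaussianInt.toComplex ((g : Matrix (Fin 2) (Fin 2) GaussianInt) 0 1)‖ ^ 2 +
         ‖GaussianInt.toComplex ((g : Matrix (Fin 2) (Fin 2) GaussianInt) 1 0)‖ ^ 2 +
         ‖GaussianInt.toComplex ((g : Matrix (Fin 2) (Fin 2) GaussianInt) 1 1)‖ ^ 2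
          < X ^ 2) ∧
        (g : Matrix (Fin 2) (Fin 2) GaussianInt) 0 0 +
          (g : Matrix (Fin 2) (Fin 2) GaussianInt) 1 1 = t} : ℝ)
      ≤ C * X ^ ((2 : ℝ) + ε) := by
  intro ε hε
  obtain ⟨C, hC, hdiv⟩ := exists_card_dvd_le_mul_rpow GaussianInt.natNorm
    (fun _ => GaussianInt.two_le_natNorm) GaussianInt.finite_setOf_natNorm_lt (ε := ε / 4)
    (by positivity)
  refine ⟨9 * (2 * Nat.card GaussianIntˣ + C * 4 ^ (ε / 4)),
    mul_pos (by norm_num) (by positivity), fun X hX t => ?_⟩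
  have hX0 : 0 ≤ X := by linarith
  have hn : (⌊X⌋₊ : ℝ) ≤ X := Nat.floor_le hX0
  have hpow : ((4 : ℝ) * ⌊X⌋₊ ^ 4) ^ (ε / 4) ≤ 4 ^ (ε / 4) * X ^ ε := by
    rw [Real.mul_rpow (by norm_num) (by positivity), ← Real.rpow_natCast,
      ← Real.rpow_mul (Nat.cast_nonneg _), Nat.cast_ofNat, mul_div_cancel₀ ε four_ne_zero]
    gcongr
  have hXε : 1 ≤ X ^ ε := Real.one_le_rpow (by linarith) hε.le
  calc _ ≤ (2 * ⌊X⌋₊ + 1) ^ 2 *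
          (2 * Nat.card GaussianIntˣ + C * (4 * ⌊X⌋₊ ^ 4 : ℝ) ^ (ε / 4)) :=
        GaussianInt.card_subtype_le_of_forall_mem_box hC.le (by positivity) hdiv _ fun g hg =>
          ⟨GaussianInt.mem_box_floor_of_sum_sq_norm_lt hX0 hg.1, hg.2⟩
    _ ≤ (3 * X) ^ 2 * (2 * Nat.card GaussianIntˣ + C * (4 ^ (ε / 4) * X ^ ε)) := by
        gcongr
        linarith
    _ ≤ 9 * (2 * Nat.card GaussianIntˣ + C * 4 ^ (ε / 4)) * X ^ ((2 : ℝ) + ε) := by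
        rw [Real.rpow_add (by linarith), Real.rpow_two]
        have hunits : 18 * X ^ 2 * Nat.card GaussianIntˣ ≤
            18 * X ^ 2 * Nat.card GaussianIntˣ * X ^ ε :=
          le_mul_of_one_le_right (by positivity) hXε
        linear_combination hunits
end

section
/- There is a constant C > 0 such that for all real X ≥ 1, the number of matrices g = [[a,b],[c,d]] ∈ SL₂(ℤ[i]) with |a|² + |b|² + |c|² + |d|² < X² is at most C·X⁴. -/
/-!
If `g` and `r` in `SL₂(ℤ[i])` have the same first column `(a, c)`, then `r⁻¹ g` is unipotent
upper triangular, so the second column of `g` is that of `r` plus `τ • (a, c)` for some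
`τ ∈ ℤ[i]`. Fixing one such `r` per first column, `g ↦ (τ, a, c)` is injective, and when both
`g` and `r` lie in `B_X` the triangle inequality gives `N(τ) (N(a) + N(c)) < 4 X²`. For fixed
`τ ≠ 0` the pair `(a, c) ∈ ℤ[i]² ≅ ℤ⁴` then ranges over a ball of radius `2X / √N(τ)`, which
holds `O(X⁴ / N(τ)²)` lattice points; the case `τ = 0` contributes `O(X⁴)`, and
`∑ τ, 1 / (1 + N(τ))²` converges.
-/

open Finset

local notation "ℤ[i]" => GaussianInt

namespace GaussianInt

lemma norm_eq_sq_add_sq (z : ℤ[i]) : z.norm = z.re ^ 2 + z.im ^ 2 := by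
  rw [Zsqrtd.norm_def]; ring

lemma sq_norm_toComplex (z : ℤ[i]) : ‖(z : ℂ)‖ ^ 2 = z.norm := by
  rw [Complex.sq_norm, intCast_real_norm]

lemma cast_norm_nonneg (z : ℤ[i]) : (0 : ℝ) ≤ z.norm := by exact_mod_cast norm_nonneg z

lemma norm_sub_le (x y : ℤ[i]) : (x - y).norm ≤ 2 * x.norm + 2 * y.norm := by
  simp only [norm_eq_sq_add_sq, Zsqrtd.re_sub, Zsqrtd.im_sub]
  nlinarith [sq_nonneg (x.re + y.re), sq_nonneg (x.im + y.im)]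

lemma one_le_norm_add_norm {v : ℤ[i] × ℤ[i]} (hv : v ≠ 0) : 1 ≤ v.1.norm + v.2.norm := by
  have h₁ := norm_nonneg v.1
  have h₂ := norm_nonneg v.2
  by_contra! h
  exact hv (Prod.ext (norm_eq_zero.mp (by omega)) (norm_eq_zero.mp (by omega)))

lemma mem_Icc_floor_sqrt {x : ℤ} {r : ℝ} (h : (x : ℝ) ^ 2 ≤ r) : x ∈ Icc (-⌊√r⌋) ⌊√r⌋ := by
  obtain ⟨h₁, h₂⟩ := abs_le.mp (Real.abs_le_sqrt h)
  rw [mem_Icc, neg_le, Int.le_floor, Int.le_floor, Int.cast_neg]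
  exact ⟨by linarith, h₂⟩

noncomputable def normBall (r : ℝ) : Finset ℤ[i] :=
  ((Icc (-⌊√r⌋) ⌊√r⌋ ×ˢ Icc (-⌊√r⌋) ⌊√r⌋).image fun p => ⟨p.1, p.2⟩).filter
    fun z => (z.norm : ℝ) < r

@[simp]
lemma mem_normBall {r : ℝ} {z : ℤ[i]} : z ∈ normBall r ↔ (z.norm : ℝ) < r := by
  refine ⟨fun h => (mem_filter.mp h).2, fun h => mem_filter.mpr ⟨mem_image.mpr ?_, h⟩⟩
  have hz : (z.norm : ℝ) = (z.re : ℝ) ^ 2 + (z.im : ℝ) ^ 2 := by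
    rw [norm_eq_sq_add_sq]; push_cast; ring
  refine ⟨(z.re, z.im), mem_product.mpr ⟨mem_Icc_floor_sqrt ?_, mem_Icc_floor_sqrt ?_⟩, rfl⟩ <;>
    nlinarith [sq_nonneg (z.re : ℝ), sq_nonneg (z.im : ℝ)]

lemma card_normBall_le {r : ℝ} (hr : 1 ≤ r) : (#(normBall r) : ℝ) ≤ 9 * r := by
  set K := ⌊√r⌋
  have hK : (K : ℝ) ≤ √r := Int.floor_le _
  have hK₀ : 0 ≤ K := Int.floor_nonneg.mpr (Real.sqrt_nonneg r)
  have hr' : 1 ≤ √r := Real.one_le_sqrt.mpr hr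
  have hIcc : (#(Icc (-K) K) : ℝ) = 2 * K + 1 := by
    rw [Int.card_Icc]
    exact_mod_cast (by omega : ((K + 1 - -K).toNat : ℤ) = 2 * K + 1)
  calc (#(normBall r) : ℝ) ≤ #(Icc (-K) K ×ˢ Icc (-K) K) := by
        exact_mod_cast (card_filter_le _ _).trans card_image_le
    _ = (2 * K + 1) ^ 2 := by rw [card_product]; push_cast; rw [hIcc]; ring
    _ ≤ (3 * √r) ^ 2 := by gcongr; linarith
    _ = 9 * r := by rw [mul_pow, Real.sq_sqrt (by linarith)]; norm_num

noncomputable def pairNormBall (r : ℝ) : Finset (ℤ[i] × ℤ[i]) :=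
  (normBall r ×ˢ normBall r).filter fun v => (v.1.norm + v.2.norm : ℝ) < r

@[simp]
lemma mem_pairNormBall {r : ℝ} {v : ℤ[i] × ℤ[i]} :
    v ∈ pairNormBall r ↔ (v.1.norm + v.2.norm : ℝ) < r := by
  have h₁ := cast_norm_nonneg v.1
  have h₂ := cast_norm_nonneg v.2
  simp only [pairNormBall, mem_filter, mem_product, mem_normBall]
  exact ⟨fun h => h.2, fun h => ⟨⟨by linarith, by linarith⟩, h⟩⟩

lemma card_pairNormBall_le {r : ℝ} (hr : 1 ≤ r) : (#(pairNormBall r) : ℝ) ≤ 81 * r ^ 2 :=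
  calc (#(pairNormBall r) : ℝ) ≤ #(normBall r) * #(normBall r) := by
        exact_mod_cast (card_filter_le _ _).trans (card_product _ _).le
    _ ≤ (9 * r) * (9 * r) := by gcongr <;> exact card_normBall_le hr
    _ = 81 * r ^ 2 := by ring

lemma summable_one_div_one_add_sq : Summable fun x : ℤ => 1 / (1 + (x : ℝ) ^ 2) := by
  refine (Real.summable_one_div_int_pow.mpr one_lt_two).of_norm_bounded_eventually ?_
  filter_upwards [Filter.eventually_cofinite_ne 0] with x hx
  have hx : (0 : ℝ) < (x : ℝ) ^ 2 := by positivity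
  rw [Real.norm_of_nonneg (by positivity)]
  gcongr
  linarith

lemma summable_one_div_one_add_norm_sq :
    Summable fun t : ℤ[i] => 1 / (1 + (t.norm : ℝ)) ^ 2 := by
  have hf := summable_one_div_one_add_sq
  have hprod := (hf.mul_of_nonneg hf (fun _ => by positivity) fun _ => by positivity).comp_injective
    (i := fun t : ℤ[i] => (t.re, t.im)) fun s t h =>
      Zsqrtd.ext (congrArg Prod.fst h) (congrArg Prod.snd h)
  refine hprod.of_nonneg_of_le (fun _ => by positivity) fun t => ?_
  have hx := sq_nonneg (t.re : ℝ)
  have hy := sq_nonneg (t.im : ℝ)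
  simp only [Function.comp_apply, norm_eq_sq_add_sq, one_div_mul_one_div]
  push_cast
  gcongr
  nlinarith [mul_nonneg hx hy]

end GaussianInt

open GaussianInt

section ShearParam

variable {R : Type*} [CommRing R]

-- For `det r = 1` this is the `(0, 1)` entry of `r⁻¹ * g`.
def shearParam (r g : Matrix (Fin 2) (Fin 2) R) : R := r 1 1 * g 0 1 - r 0 1 * g 1 1

lemma sub_eq_shearParam_mul {r g : Matrix (Fin 2) (Fin 2) R} (hr : r.det = 1) (hg : g.det = 1)
    (h₀ : r 0 0 = g 0 0) (h₁ : r 1 0 = g 1 0) :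
    g 0 1 - r 0 1 = shearParam r g * g 0 0 ∧ g 1 1 - r 1 1 = shearParam r g * g 1 0 := by
  rw [Matrix.det_fin_two, h₀, h₁] at hr
  rw [Matrix.det_fin_two] at hg
  constructor <;> unfold shearParam
  · linear_combination r 0 1 * hg - g 0 1 * hr
  · linear_combination r 1 1 * hg - g 1 1 * hr

lemma eq_of_shearParam_eq {r g g' : Matrix (Fin 2) (Fin 2) R} (hr : r.det = 1)
    (hg : g.det = 1) (hg' : g'.det = 1) (h₀ : r 0 0 = g 0 0) (h₁ : r 1 0 = g 1 0)
    (h₀' : r 0 0 = g' 0 0) (h₁' : r 1 0 = g' 1 0) (h : shearParam r g = shearParam r g') :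
    g = g' := by
  obtain ⟨hb, hd⟩ := sub_eq_shearParam_mul hr hg h₀ h₁
  obtain ⟨hb', hd'⟩ := sub_eq_shearParam_mul hr hg' h₀' h₁'
  rw [h, ← h₀, h₀'] at hb
  rw [h, ← h₁, h₁'] at hd
  ext i j
  fin_cases i <;> fin_cases j
  exacts [h₀.symm.trans h₀', sub_left_injective (hb.trans hb'.symm), h₁.symm.trans h₁',
    sub_left_injective (hd.trans hd'.symm)]

lemma col_zero_ne_zero_of_det_eq_one [Nontrivial R] {g : Matrix (Fin 2) (Fin 2) R}
    (hg : g.det = 1) : (g 0 0, g 1 0) ≠ 0 := fun h => by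
  rw [Prod.mk_eq_zero] at h
  rw [Matrix.det_fin_two, h.1, h.2] at hg
  simp at hg

end ShearParam

lemma norm_shearParam_mul_le {r g : Matrix (Fin 2) (Fin 2) ℤ[i]} (hr : r.det = 1)
    (hg : g.det = 1) (h₀ : r 0 0 = g 0 0) (h₁ : r 1 0 = g 1 0) :
    (shearParam r g).norm * ((g 0 0).norm + (g 1 0).norm) ≤
      2 * ((g 0 1).norm + (g 1 1).norm + (r 0 1).norm + (r 1 1).norm) := by
  obtain ⟨hb, hd⟩ := sub_eq_shearParam_mul hr hg h₀ h₁
  have hb' := norm_sub_le (g 0 1) (r 0 1)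
  have hd' := norm_sub_le (g 1 1) (r 1 1)
  rw [hb, Zsqrtd.norm_mul] at hb'
  rw [hd, Zsqrtd.norm_mul] at hd'
  linarith

noncomputable def entryNormSum (g : Matrix (Fin 2) (Fin 2) ℤ[i]) : ℝ :=
  (g 0 0).norm + (g 0 1).norm + (g 1 0).norm + (g 1 1).norm

noncomputable def shearFiber (X : ℝ) (t : ℤ[i]) : Finset (ℤ[i] × ℤ[i]) :=
  (pairNormBall (X ^ 2)).filter fun v => v ≠ 0 ∧ (t.norm : ℝ) * (v.1.norm + v.2.norm) < 4 * X ^ 2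

lemma mk_shearParam_mem_sigma_shearFiber {X : ℝ} {r g : Matrix (Fin 2) (Fin 2) ℤ[i]}
    (hr : r.det = 1) (hg : g.det = 1) (h₀ : r 0 0 = g 0 0) (h₁ : r 1 0 = g 1 0)
    (hrX : entryNormSum r < X ^ 2) (hgX : entryNormSum g < X ^ 2) :
    (⟨shearParam r g, (g 0 0, g 1 0)⟩ : Σ _ : ℤ[i], ℤ[i] × ℤ[i]) ∈
      (normBall (4 * X ^ 2)).sigma (shearFiber X) := by
  have hcol := col_zero_ne_zero_of_det_eq_one hg
  have hn : (1 : ℝ) ≤ (g 0 0).norm + (g 1 0).norm := by exact_mod_cast one_le_norm_add_norm hcol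
  have hτ : ((shearParam r g).norm : ℝ) * ((g 0 0).norm + (g 1 0).norm) ≤
      2 * ((g 0 1).norm + (g 1 1).norm + (r 0 1).norm + (r 1 1).norm) := by
    exact_mod_cast norm_shearParam_mul_le hr hg h₀ h₁
  unfold entryNormSum at hrX hgX
  have := cast_norm_nonneg (g 0 1); have := cast_norm_nonneg (g 1 1)
  have := cast_norm_nonneg (r 0 0); have := cast_norm_nonneg (r 1 0)
  have hτX : ((shearParam r g).norm : ℝ) * ((g 0 0).norm + (g 1 0).norm) < 4 * X ^ 2 :=
    hτ.trans_lt (by linarith)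
  simp only [mem_sigma, mem_normBall, shearFiber, mem_filter, mem_pairNormBall]
  exact ⟨(le_mul_of_one_le_right (cast_norm_nonneg _) hn).trans_lt hτX, by linarith, hcol, hτX⟩

lemma card_shearFiber_le {X : ℝ} (hX : 1 ≤ X) (t : ℤ[i]) :
    (#(shearFiber X t) : ℝ) ≤ 5184 * X ^ 4 / (1 + t.norm) ^ 2 := by
  rcases eq_or_ne t 0 with rfl | ht
  · calc (#(shearFiber X 0) : ℝ) ≤ #(pairNormBall (X ^ 2)) := by
          exact_mod_cast card_le_card (filter_subset _ _)
      _ ≤ 81 * (X ^ 2) ^ 2 := card_pairNormBall_le (by nlinarith)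
      _ ≤ 5184 * X ^ 4 / (1 + ((0 : ℤ[i]).norm : ℝ)) ^ 2 := by
          rw [Zsqrtd.norm_zero]; nlinarith [pow_nonneg (zero_le_one.trans hX) 4]
  rcases (shearFiber X t).eq_empty_or_nonempty with h | ⟨v, hv⟩
  · rw [h, card_empty, Nat.cast_zero]; positivity
  have hN : (1 : ℝ) ≤ t.norm := by
    have := norm_nonneg t
    have := mt norm_eq_zero.mp ht
    exact_mod_cast (by omega : 1 ≤ t.norm)
  have hmem : ∀ w ∈ shearFiber X t,
      1 ≤ (w.1.norm + w.2.norm : ℝ) ∧ (t.norm : ℝ) * (w.1.norm + w.2.norm) < 4 * X ^ 2 := by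
    intro w hw
    obtain ⟨-, hw₀, hw⟩ := mem_filter.mp hw
    exact ⟨by exact_mod_cast one_le_norm_add_norm hw₀, hw⟩
  set r := 4 * X ^ 2 / t.norm
  -- the fibre is nonempty, which forces its radius `r` to be at least `1`
  have hr : 1 ≤ r := by
    obtain ⟨hv₁, hv₂⟩ := hmem v hv
    rw [le_div_iff₀ (by linarith)]
    nlinarith
  have hsub : shearFiber X t ⊆ pairNormBall r := fun w hw => by
    rw [mem_pairNormBall, lt_div_iff₀ (by linarith), mul_comm]
    exact (hmem w hw).2
  calc (#(shearFiber X t) : ℝ) ≤ #(pairNormBall r) := by exact_mod_cast card_le_card hsub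
    _ ≤ 81 * r ^ 2 := card_pairNormBall_le hr
    _ = 1296 * X ^ 4 / (t.norm : ℝ) ^ 2 := by rw [div_pow]; ring
    _ ≤ 5184 * X ^ 4 / (1 + t.norm) ^ 2 := by
        rw [div_le_div_iff₀ (by positivity) (by positivity)]
        nlinarith [mul_nonneg (pow_nonneg (zero_le_one.trans hX) 4)
          (mul_nonneg (sub_nonneg.mpr hN) (by linarith : (0 : ℝ) ≤ 3 * t.norm + 1))]

lemma card_sigma_shearFiber_le {X : ℝ} (hX : 1 ≤ X) :
    (#((normBall (4 * X ^ 2)).sigma (shearFiber X)) : ℝ) ≤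
      5184 * (∑' t : ℤ[i], 1 / (1 + (t.norm : ℝ)) ^ 2) * X ^ 4 := by
  rw [card_sigma, Nat.cast_sum]
  calc ∑ t ∈ normBall (4 * X ^ 2), (#(shearFiber X t) : ℝ)
      ≤ ∑ t ∈ normBall (4 * X ^ 2), 5184 * X ^ 4 * (1 / (1 + (t.norm : ℝ)) ^ 2) :=
        sum_le_sum fun t _ => (card_shearFiber_le hX t).trans_eq (by ring)
    _ = 5184 * X ^ 4 * ∑ t ∈ normBall (4 * X ^ 2), 1 / (1 + (t.norm : ℝ)) ^ 2 :=
        (mul_sum ..).symm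
    _ ≤ 5184 * X ^ 4 * ∑' t : ℤ[i], 1 / (1 + (t.norm : ℝ)) ^ 2 := by
        gcongr
        exact summable_one_div_one_add_norm_sq.sum_le_tsum _ fun _ _ => by positivity
    _ = _ := by ring

lemma card_le_card_sigma_shearFiber (X : ℝ) {P : Matrix.SpecialLinearGroup (Fin 2) ℤ[i] → Prop}
    (hP : ∀ g, P g → entryNormSum g < X ^ 2) :
    Nat.card {g // P g} ≤ #((normBall (4 * X ^ 2)).sigma (shearFiber X)) := by
  rcases isEmpty_or_nonempty {g // P g} with _ | _
  · simp
  let m (g : {g // P g}) : Matrix (Fin 2) (Fin 2) ℤ[i] := g.1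
  have hdet (g : {g // P g}) : (m g).det = 1 := g.1.2
  let col (g : {g // P g}) : ℤ[i] × ℤ[i] := (m g 0 0, m g 1 0)
  let rep (g : {g // P g}) : {g // P g} := Function.invFun col (col g)
  have hrep₀ (g : {g // P g}) : m (rep g) 0 0 = m g 0 0 :=
    congrArg Prod.fst (Function.invFun_eq (f := col) ⟨g, rfl⟩)
  have hrep₁ (g : {g // P g}) : m (rep g) 1 0 = m g 1 0 :=
    congrArg Prod.snd (Function.invFun_eq (f := col) ⟨g, rfl⟩)
  rw [← Nat.card_eq_finsetCard]
  refine Nat.card_le_card_of_injective (fun g => ⟨⟨shearParam (m (rep g)) (m g), col g⟩,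
    mk_shearParam_mem_sigma_shearFiber (hdet _) (hdet g) (hrep₀ g) (hrep₁ g)
      (hP _ (rep g).2) (hP _ g.2)⟩) fun g g' h => ?_
  simp only [Subtype.mk.injEq, Sigma.mk.inj_iff, heq_eq_eq] at h
  obtain ⟨hτ, hcol⟩ := h
  have hrep : rep g = rep g' := congrArg (Function.invFun col) hcol
  rw [hrep] at hτ
  simp only [col, Prod.mk.injEq] at hcol
  refine Subtype.ext (Subtype.ext (eq_of_shearParam_eq (hdet _) (hdet g) (hdet g') ?_ ?_
    (hrep₀ g') (hrep₁ g') hτ))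
  exacts [(hrep₀ g').trans hcol.1.symm, (hrep₁ g').trans hcol.2.symm]

/-- There is `C > 0` such that for all real `X ≥ 1`, the number of
`g = [[a,b],[c,d]] ∈ SL₂(ℤ[i])` with `|a|² + |b|² + |c|² + |d|² < X²` is at most `C · X⁴`. -/
theorem stmt10 : ∃ C > (0 : ℝ), ∀ X : ℝ, 1 ≤ X →
    (Nat.card {g : Matrix.SpecialLinearGroup (Fin 2) GaussianInt //
        ‖GaussianInt.toComplex ((g : Matrix (Fin 2) (Fin 2) GaussianInt) 0 0)‖ ^ 2 +
        ‖GaussianInt.toComplex ((g : Matrix (Fin 2) (Fin 2) GaussianInt) 0 1)‖ ^ 2 +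
        ‖GaussianInt.toComplex ((g : Matrix (Fin 2) (Fin 2) GaussianInt) 1 0)‖ ^ 2 +
        ‖GaussianInt.toComplex ((g : Matrix (Fin 2) (Fin 2) GaussianInt) 1 1)‖ ^ 2
          < X ^ 2} : ℝ)
      ≤ C * X ^ 4 := by
  have hS : 0 < ∑' t : ℤ[i], 1 / (1 + (t.norm : ℝ)) ^ 2 :=
    summable_one_div_one_add_norm_sq.tsum_pos (fun _ => by positivity) 0 (by simp)
  refine ⟨5184 * ∑' t : ℤ[i], 1 / (1 + (t.norm : ℝ)) ^ 2, by positivity, fun X hX => ?_⟩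
  calc _ ≤ (#((normBall (4 * X ^ 2)).sigma (shearFiber X)) : ℝ) := by
        exact_mod_cast card_le_card_sigma_shearFiber X fun g hg => by
          simpa only [entryNormSum, sq_norm_toComplex] using hg
    _ ≤ _ := card_sigma_shearFiber_le hX
end
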